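/- For integers $n \geq d \geq 4$ with $d-1$ odd, one has $2\binom{n-d/2}{d/2-1} \leq \frac{n \cdot \prod_{i=1}^{n-d}\left(\lfloor\frac{d-1}{2}\rfloor + i + 1\right)}{(n-d+1)!}$, i.e., $2\binom{n-d/2}{d/2-1} \leq \frac{n\left(\frac{d}{2}+1\right)\left(\frac{d}{2}+2\right)\cdots\left(\frac{d}{2}+n-d\right)}{(n-d+1)!}$. -/

import Mathlib

/-!
Write `d = 2(a + 1)` and `n = d + b`. The product is `(a + 1 + b)! / (a + 1)!`, so the right-hand
side equals `n / (a + 1) · C(a + b + 1, a)`, while the left-hand side is `2 · C(a + b + 1, a)`.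
The inequality is therefore just `2(a + 1) ≤ n`, i.e. `d ≤ n`.
-/

open Finset
open scoped Nat

theorem Nat.factorial_mul_prod_Icc_add (c b : ℕ) : c ! * ∏ i ∈ Icc 1 b, (c + i) = (c + b)! := by
  induction b with
  | zero => simp
  | succ b ih =>
    rw [prod_Icc_succ_top (by omega), ← mul_assoc, ih, ← add_assoc, factorial_succ, mul_comm]

theorem Nat.choose_mul_factorial_eq_succ_mul_prod_Icc (a b : ℕ) :
    (a + b + 1).choose a * (b + 1)! = (a + 1) * ∏ i ∈ Icc 1 b, (a + 1 + i) := by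
  apply Nat.eq_of_mul_eq_mul_left a.factorial_pos
  calc a ! * ((a + b + 1).choose a * (b + 1)!) = (b + 1 + a).choose a * (b + 1)! * a ! := by
        rw [show a + b + 1 = b + 1 + a by omega]; ring
    _ = (a + 1 + b)! := by rw [add_choose_mul_factorial_mul_factorial]; congr 1; omega
    _ = a ! * ((a + 1) * ∏ i ∈ Icc 1 b, (a + 1 + i)) := by
        rw [← factorial_mul_prod_Icc_add, factorial_succ]; ring

theorem Nat.two_mul_choose_mul_factorial_le (a b n : ℕ) (hn : 2 * (a + 1) ≤ n) :
    2 * (a + b + 1).choose a * (b + 1)! ≤ n * ∏ i ∈ Icc 1 b, (a + 1 + i) := by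
  apply Nat.le_of_mul_le_mul_left _ a.succ_pos
  calc (a + 1) * (2 * (a + b + 1).choose a * (b + 1)!)
      = 2 * (a + 1) * ((a + b + 1).choose a * (b + 1)!) := by ring
    _ ≤ n * ((a + b + 1).choose a * (b + 1)!) := Nat.mul_le_mul_right _ hn
    _ = (a + 1) * (n * ∏ i ∈ Icc 1 b, (a + 1 + i)) := by
        rw [choose_mul_factorial_eq_succ_mul_prod_Icc]; ring

theorem cyclic_odd_multiplicity_le_upper_bound_general (n d : ℕ) (hnd : d ≤ n)
    (hodd : Odd (d - 1)) :
    2 * (((n - d / 2).choose (d / 2 - 1) : ℚ)) ≤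
      (n : ℚ) * (∏ i ∈ Finset.Icc 1 (n - d), ((d : ℚ) / 2 + (i : ℚ))) /
        (Nat.factorial (n - d + 1) : ℚ) := by
  obtain ⟨a, rfl⟩ : ∃ a, d = 2 * (a + 1) := by
    obtain ⟨j, hj⟩ := hodd
    exact ⟨j, by omega⟩
  obtain ⟨b, rfl⟩ := Nat.exists_eq_add_of_le hnd
  have hhalf : 2 * (a + 1) / 2 = a + 1 := by omega
  have hsub : 2 * (a + 1) + b - (a + 1) = a + b + 1 := by omega
  rw [hhalf, hsub, Nat.add_sub_cancel_left, Nat.add_sub_cancel, le_div_iff₀ (by positivity)]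
  have key := Nat.two_mul_choose_mul_factorial_le a b _ (Nat.le_add_right _ b)
  have hcast : ((2 * (a + 1) : ℕ) : ℚ) / 2 = ((a + 1 : ℕ) : ℚ) := by push_cast; ring
  rw [hcast]
  exact_mod_cast key

/-- For integers `n ≥ d ≥ 4` with `d - 1` odd, the multiplicity
`2·C(n - d/2, d/2 - 1)` of the boundary complex of the cyclic polytope `C(n, d-1)`
is at most the upper bound `n·(d/2+1)(d/2+2)⋯(d/2+n-d)/(n-d+1)!` coming from the
maximal shifts of its minimal free resolution. -/
theorem cyclic_odd_multiplicity_le_upper_bound (n d : ℕ) (hd : 4 ≤ d) (hnd : d ≤ n)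
    (hodd : Odd (d - 1)) :
    2 * (((n - d / 2).choose (d / 2 - 1) : ℚ)) ≤
      (n : ℚ) * (∏ i ∈ Finset.Icc 1 (n - d), ((d : ℚ) / 2 + (i : ℚ))) /
        (Nat.factorial (n - d + 1) : ℚ) :=
  cyclic_odd_multiplicity_le_upper_bound_general n d hnd hodd
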